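/- Lyapunov decrease: For the averaging dynamics Φ(t+1) = A(t)Φ(t) with row-stochastic matrices A(t) admitting an adjoint sequence of probability vectors Π(t) (with Π(t)ᵀ = Π(t+1)ᵀA(t)), the Lyapunov function V(t) = Σ_u π_u(t)(φ_u(t) − Π(t)ᵀΦ(t))² satisfies V(t+1) = V(t) − (1/2) Σ_{u,v} H_{uv}(t)(φ_u(t) − φ_v(t))², where H(t) = A(t)ᵀ diag(π(t+1)) A(t); in particular V is nonincreasing. -/
import Mathlib


open Finset

/-- **Lyapunov decrease** for averaging dynamics. Let `Φ (t+1) = A t *ᵥ Φ t`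
with `A t` row-stochastic, and let `π` be an adjoint sequence of probability
vectors (`π t u = ∑ v, π (t+1) v * A t v u`). With
`V t = ∑ u, π t u * (Φ t u - ∑ v, π t v * Φ t v)²` and
`H t u v = ∑ w, π (t+1) w * A t w u * A t w v` (i.e. `H = Aᵀ diag(π(t+1)) A`),
we have `V (t+1) = V t - (1/2) ∑_{u,v} H t u v * (Φ t u - Φ t v)²`;
in particular `V` is nonincreasing. -/
theorem averaging_lyapunov_decrease
    {n : ℕ}
    (A : ℕ → Matrix (Fin n) (Fin n) ℝ)
    (hA_nonneg : ∀ t u v, 0 ≤ A t u v)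
    (hA_rowsum : ∀ t u, ∑ v, A t u v = 1)
    (π : ℕ → Fin n → ℝ)
    (hπ_nonneg : ∀ t u, 0 ≤ π t u)
    (hπ_sum : ∀ t, ∑ u, π t u = 1)
    (hadj : ∀ t u, π t u = ∑ v, π (t + 1) v * A t v u)
    (Φ : ℕ → Fin n → ℝ)
    (hupd : ∀ t u, Φ (t + 1) u = ∑ v, A t u v * Φ t v)
    (V : ℕ → ℝ)
    (hV : ∀ t, V t = ∑ u, π t u * (Φ t u - ∑ v, π t v * Φ t v) ^ 2)
    (H : ℕ → Fin n → Fin n → ℝ)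
    (hH : ∀ t u v, H t u v = ∑ w, π (t + 1) w * A t w u * A t w v) :
    ∀ t, V (t + 1) = V t - (1 / 2) * ∑ u, ∑ v, H t u v * (Φ t u - Φ t v) ^ 2
      ∧ V (t + 1) ≤ V t := by
  intro t
  -- variance expansion for any time s
  have key : ∀ s, V s = (∑ u, π s u * Φ s u ^ 2) - (∑ v, π s v * Φ s v) ^ 2 := by
    intro s
    rw [hV]
    have h1 := hπ_sum s
    have expand : ∀ u, π s u * (Φ s u - ∑ v, π s v * Φ s v) ^ 2 =
        π s u * Φ s u ^ 2
        - 2 * (∑ v, π s v * Φ s v) * (π s u * Φ s u)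
        + (∑ v, π s v * Φ s v) ^ 2 * π s u := by
      intro u; ring
    simp_rw [expand]
    rw [Finset.sum_add_distrib, Finset.sum_sub_distrib, ← Finset.mul_sum,
      ← Finset.mul_sum, h1]
    ring
  -- mean invariance
  have hmean : (∑ v, π (t + 1) v * Φ (t + 1) v) = ∑ v, π t v * Φ t v := by
    simp_rw [hupd, Finset.mul_sum]
    rw [Finset.sum_comm]
    refine Finset.sum_congr rfl fun v _ => ?_
    rw [hadj t v, Finset.sum_mul]
    exact Finset.sum_congr rfl fun w _ => by ring
  -- row sums of H
  have hHrow : ∀ u, (∑ v, H t u v) = π t u := by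
    intro u
    simp_rw [hH]
    rw [Finset.sum_comm]
    rw [hadj t u]
    refine Finset.sum_congr rfl fun w _ => ?_
    rw [← Finset.mul_sum, hA_rowsum, mul_one]
  have hHsymm : ∀ u v, H t u v = H t v u := by
    intro u v; rw [hH, hH]
    exact Finset.sum_congr rfl fun w _ => by ring
  -- the quadratic form identity
  have hQ : (∑ u, ∑ v, H t u v * (Φ t u - Φ t v) ^ 2)
      = 2 * (∑ u, π t u * Φ t u ^ 2)
        - 2 * (∑ w, π (t + 1) w * Φ (t + 1) w ^ 2) := by
    have e1 : (∑ u, ∑ v, H t u v * Φ t u ^ 2) = ∑ u, π t u * Φ t u ^ 2 := by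
      refine Finset.sum_congr rfl fun u _ => ?_
      rw [← Finset.sum_mul, hHrow, mul_comm]
    have e3 : (∑ u, ∑ v, H t u v * Φ t v ^ 2) = ∑ u, π t u * Φ t u ^ 2 := by
      rw [Finset.sum_comm]
      refine Finset.sum_congr rfl fun v _ => ?_
      rw [← Finset.sum_mul]
      rw [show (∑ u, H t u v) = π t v from
        (Finset.sum_congr rfl fun u _ => hHsymm u v).trans (hHrow v), mul_comm]
    have e2 : (∑ u, ∑ v, H t u v * (Φ t u * Φ t v))
        = ∑ w, π (t + 1) w * Φ (t + 1) w ^ 2 := by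
      have hterm : ∀ w, π (t + 1) w * Φ (t + 1) w ^ 2
          = ∑ u, ∑ v, π (t + 1) w * A t w u * A t w v * (Φ t u * Φ t v) := by
        intro w
        rw [hupd, sq, Finset.sum_mul_sum, Finset.mul_sum]
        refine Finset.sum_congr rfl fun u _ => ?_
        rw [Finset.mul_sum]
        exact Finset.sum_congr rfl fun v _ => by ring
      calc (∑ u, ∑ v, H t u v * (Φ t u * Φ t v))
          = ∑ u, ∑ v, ∑ w, π (t + 1) w * A t w u * A t w v * (Φ t u * Φ t v) := by
            refine Finset.sum_congr rfl fun u _ => Finset.sum_congr rfl fun v _ => ?_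
            rw [hH, Finset.sum_mul]
        _ = ∑ u, ∑ w, ∑ v, π (t + 1) w * A t w u * A t w v * (Φ t u * Φ t v) :=
            Finset.sum_congr rfl fun u _ => Finset.sum_comm
        _ = ∑ w, ∑ u, ∑ v, π (t + 1) w * A t w u * A t w v * (Φ t u * Φ t v) :=
            Finset.sum_comm
        _ = ∑ w, π (t + 1) w * Φ (t + 1) w ^ 2 :=
            Finset.sum_congr rfl fun w _ => (hterm w).symm
    have expand : ∀ u v, H t u v * (Φ t u - Φ t v) ^ 2 =
        H t u v * Φ t u ^ 2 - 2 * (H t u v * (Φ t u * Φ t v))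
        + H t u v * Φ t v ^ 2 := by intro u v; ring
    simp_rw [expand]
    have split : (∑ u, ∑ v, (H t u v * Φ t u ^ 2 - 2 * (H t u v * (Φ t u * Φ t v))
        + H t u v * Φ t v ^ 2))
      = (∑ u, ∑ v, H t u v * Φ t u ^ 2)
        - 2 * (∑ u, ∑ v, H t u v * (Φ t u * Φ t v))
        + (∑ u, ∑ v, H t u v * Φ t v ^ 2) := by
      simp only [Finset.sum_add_distrib, Finset.sum_sub_distrib, Finset.mul_sum]
    rw [split]
    rw [e1, e2, e3]; ring
  have hHnn : ∀ u v, 0 ≤ H t u v := by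
    intro u v; rw [hH]
    exact Finset.sum_nonneg fun w _ =>
      mul_nonneg (mul_nonneg (hπ_nonneg _ _) (hA_nonneg _ _ _)) (hA_nonneg _ _ _)
  have hmain : V (t + 1) = V t - (1 / 2) * ∑ u, ∑ v, H t u v * (Φ t u - Φ t v) ^ 2 := by
    rw [key (t + 1), key t, hmean, hQ]; ring
  refine ⟨hmain, ?_⟩
  rw [hmain]
  have : 0 ≤ ∑ u, ∑ v, H t u v * (Φ t u - Φ t v) ^ 2 :=
    Finset.sum_nonneg fun u _ => Finset.sum_nonneg fun v _ =>
      mul_nonneg (hHnn u v) (sq_nonneg _)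
  linarith
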